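/- arXiv:2410.18973 — 4 statements merged into one kernel-verified Lean document; each statement's English description precedes it below -/
import Mathlib

section
/- Let $D > 0$. Then, as the integer $t \to \infty$, $e^{-2D\sqrt{t}} \sum_{\tau=1}^{t} \frac{1}{\tau} e^{2D\sqrt{\tau+1}} = O\left(\frac{1}{\sqrt{t}}\right)$. -/
open Asymptotics Filter

private lemma hotdog_frac_ineq (D a b c : ℝ) (hD : 0 < D) (ha : 1 ≤ a) (hab : a ≤ b)
    (hbc : b ≤ c) (hba : b^2 = a^2 + 1) (hcb : c^2 = b^2 + 1)
    (h1 : 1 + 2*D ≤ b) (h2 : 2*c ≤ D*a^2) :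
    1/b^2 ≤ (2/D) * (1/b - c/((c+D)*a)) := by
  have ha0 : (0:ℝ) < a := by linarith
  have hb0 : (0:ℝ) < b := by linarith
  have hc0 : (0:ℝ) < c := by linarith
  have hcD : (0:ℝ) < c + D := by linarith
  have s1 : c ≤ b + 1/2 := by nlinarith [sq_nonneg (c - b - 1/2), sq_nonneg (c + b)]
  have h2a : 2*a*(b-a) ≤ 1 := by nlinarith [sq_nonneg (b-a)]
  have s2 : 2*(b*c)*(b-a) ≤ D*a*b/2 := by
    nlinarith [mul_le_mul_of_nonneg_left h2a (by positivity : (0:ℝ) ≤ 2*b*c),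
      mul_le_mul_of_nonneg_right h2 (by positivity : (0:ℝ) ≤ b),
      mul_pos ha0 hb0, mul_pos (mul_pos hb0 hc0) ha0]
  have hpoly : D*(a*(c+D)) + 2*(b^2*c) ≤ 2*(a*b*(c+D)) := by nlinarith [s1, s2, h1, ha0, hb0]
  rw [div_le_iff₀ (by positivity)]
  have hrw : (2/D) * (1/b - c/((c+D)*a)) = (2*((c+D)*a - b*c)) / (D*(b*((c+D)*a))) := by
    field_simp
  rw [hrw, div_mul_eq_mul_div, le_div_iff₀ (by positivity)]
  nlinarith [mul_le_mul_of_nonneg_right hpoly hb0.le]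

private lemma hotdog_key_ineq (D a b c : ℝ) (hD : 0 < D) (ha : 1 ≤ a) (hab : a ≤ b)
    (hbc : b ≤ c) (hba : b^2 = a^2 + 1) (hcb : c^2 = b^2 + 1)
    (h1 : 1 + 2*D ≤ b) (h2 : 2*c ≤ D*a^2) :
    (1/b^2) * Real.exp (2*D*c) ≤
      (2/D) * (Real.exp (2*D*c) / b - Real.exp (2*D*b) / a) := by
  have ha0 : (0:ℝ) < a := by linarith
  have hb0 : (0:ℝ) < b := by linarith
  have hc0 : (0:ℝ) < c := by linarith
  have hcD : (0:ℝ) < c + D := by linarith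
  have hexp : Real.exp (2*D*b) * (c + D) ≤ Real.exp (2*D*c) * c := by
    have hcb1 : (c - b) * (c + b) = 1 := by nlinarith
    have h3 : 2*D*(c-b) + 1 ≤ Real.exp (2*D*(c-b)) := Real.add_one_le_exp _
    have h4 : c + D ≤ c * (2*D*(c-b) + 1) := by nlinarith [mul_pos hD hc0, hcb1, hbc, hb0]
    have h5 : Real.exp (2*D*b) * (c + D) ≤ Real.exp (2*D*b) * (c * Real.exp (2*D*(c-b))) := by
      have := (Real.exp_pos (2*D*b)).le
      nlinarith [Real.exp_pos (2*D*b),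
        mul_le_mul_of_nonneg_left
          (le_trans h4 (by nlinarith [h3, hc0] : c * (2*D*(c-b)+1) ≤ c * Real.exp (2*D*(c-b))))
          (Real.exp_pos (2*D*b)).le]
    calc Real.exp (2*D*b) * (c + D) ≤ Real.exp (2*D*b) * (c * Real.exp (2*D*(c-b))) := h5
      _ = Real.exp (2*D*b + 2*D*(c-b)) * c := by rw [Real.exp_add]; ring
      _ = Real.exp (2*D*c) * c := by ring_nf
  have hexp2 : Real.exp (2*D*b) / a ≤ Real.exp (2*D*c) * c / ((c+D)*a) := by
    rw [div_le_div_iff₀ (by positivity) (by positivity)]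
    nlinarith [mul_le_mul_of_nonneg_right hexp ha0.le]
  have hfrac := hotdog_frac_ineq D a b c hD ha hab hbc hba hcb h1 h2
  have hE : (0:ℝ) < Real.exp (2*D*c) := Real.exp_pos _
  calc (1/b^2) * Real.exp (2*D*c)
      ≤ ((2/D) * (1/b - c/((c+D)*a))) * Real.exp (2*D*c) :=
        mul_le_mul_of_nonneg_right hfrac hE.le
    _ = (2/D) * (Real.exp (2*D*c) / b - Real.exp (2*D*c) * c / ((c+D)*a)) := by ring
    _ ≤ (2/D) * (Real.exp (2*D*c) / b - Real.exp (2*D*b) / a) := by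
        apply mul_le_mul_of_nonneg_left _ (by positivity : (0:ℝ) ≤ 2/D)
        linarith [hexp2]

private lemma hotdog_key_nat (D : ℝ) (hD : 0 < D) (n : ℕ)
    (hb : 1 + 2*D ≤ Real.sqrt ((n:ℝ)+1)) (hc : 2*Real.sqrt ((n:ℝ)+2) ≤ D*(n:ℝ)) :
    (1/((n:ℝ)+1)) * Real.exp (2*D*Real.sqrt ((n:ℝ)+2)) ≤
      (2/D) * (Real.exp (2*D*Real.sqrt ((n:ℝ)+2)) / Real.sqrt ((n:ℝ)+1)
        - Real.exp (2*D*Real.sqrt ((n:ℝ)+1)) / Real.sqrt (n:ℝ)) := by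
  set a := Real.sqrt (n:ℝ) with ha_def
  set b := Real.sqrt ((n:ℝ)+1) with hb_def
  set c := Real.sqrt ((n:ℝ)+2) with hc_def
  have hn0 : (0:ℝ) ≤ (n:ℝ) := Nat.cast_nonneg n
  have ha2 : a^2 = (n:ℝ) := Real.sq_sqrt hn0
  have hb2 : b^2 = (n:ℝ)+1 := Real.sq_sqrt (by linarith)
  have hc2 : c^2 = (n:ℝ)+2 := Real.sq_sqrt (by linarith)
  -- n ≥ 1
  have hn1 : (1:ℝ) ≤ (n:ℝ) := by
    have hcpos : (0:ℝ) < c := Real.sqrt_pos.2 (by linarith)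
    have hDn : (0:ℝ) < D * n := lt_of_lt_of_le (by linarith) hc
    have hnpos : (0:ℝ) < (n:ℝ) := by nlinarith
    have : 0 < n := by exact_mod_cast hnpos
    exact_mod_cast this
  have ha1 : (1:ℝ) ≤ a := (Real.le_sqrt (by norm_num) hn0).2 (by nlinarith)
  have hab : a ≤ b := Real.sqrt_le_sqrt (by linarith)
  have hbc : b ≤ c := Real.sqrt_le_sqrt (by linarith)
  have hc' : 2*c ≤ D*a^2 := by rw [ha2]; exact hc
  have h := hotdog_key_ineq D a b c hD ha1 hab hbc (by linarith) (by linarith) hb hc'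
  rwa [hb2] at h

/-- As `t → ∞`, `exp(-2D√t) ∑_{τ=1}^{t} τ⁻¹ exp(2D√(τ+1)) = O(1/√t)`. -/
theorem stmt2 (D : ℝ) (hD : 0 < D) :
    (fun t : ℕ => Real.exp (-2 * D * Real.sqrt t) *
        ∑ τ ∈ Finset.Icc 1 t, (1 / (τ : ℝ)) * Real.exp (2 * D * Real.sqrt (τ + 1)))
      =O[atTop] fun t : ℕ => 1 / Real.sqrt t := by
  have hev1 : ∀ᶠ n : ℕ in atTop, 1 + 2*D ≤ Real.sqrt ((n:ℝ)+1) := by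
    filter_upwards [eventually_ge_atTop ⌈(1+2*D)^2⌉₊] with n hn
    have h1 : ((1:ℝ)+2*D)^2 ≤ (n:ℝ) := le_trans (Nat.le_ceil _) (by exact_mod_cast hn)
    exact (Real.le_sqrt (by positivity) (by positivity)).2 (by linarith)
  have hev2 : ∀ᶠ n : ℕ in atTop, 2*Real.sqrt ((n:ℝ)+2) ≤ D*(n:ℝ) := by
    filter_upwards [eventually_ge_atTop (max 2 ⌈8/D^2⌉₊)] with n hn
    have hn2 : (2:ℝ) ≤ (n:ℝ) := by exact_mod_cast le_trans (le_max_left _ _) hn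
    have h8 : 8/D^2 ≤ (n:ℝ) :=
      le_trans (Nat.le_ceil _) (by exact_mod_cast le_trans (le_max_right _ _) hn)
    have h8' : (8:ℝ) ≤ D^2 * n := by rw [div_le_iff₀ (by positivity)] at h8; linarith
    have hsq : (n:ℝ)+2 ≤ (D*n/2)^2 := by nlinarith
    have h9 := Real.sqrt_le_sqrt hsq
    rw [Real.sqrt_sq (by positivity)] at h9
    linarith
  obtain ⟨T, hT⟩ := eventually_atTop.mp (hev1.and hev2)
  set K : ℝ := ∑ τ ∈ Finset.Icc 1 T, (1 / (τ : ℝ)) * Real.exp (2 * D * Real.sqrt (τ + 1))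
    with hK_def
  have hK0 : 0 ≤ K := Finset.sum_nonneg fun τ _ => by positivity
  have claim : ∀ t : ℕ, T ≤ t →
      (∑ τ ∈ Finset.Icc 1 t, (1 / (τ : ℝ)) * Real.exp (2 * D * Real.sqrt (τ + 1)))
        ≤ K + (2/D) * (Real.exp (2*D*Real.sqrt ((t:ℝ)+1)) / Real.sqrt (t:ℝ)) := by
    intro t ht
    induction t, ht using Nat.le_induction with
    | base =>
        rw [← hK_def]
        have h0 : (0:ℝ) ≤ (2/D) * (Real.exp (2*D*Real.sqrt ((T:ℝ)+1)) / Real.sqrt (T:ℝ)) := by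
          positivity
        linarith
    | succ t ht ih =>
        rw [Finset.sum_Icc_succ_top (Nat.le_add_left 1 t)]
        have hkey := hotdog_key_nat D hD t (hT t ht).1 (hT t ht).2
        push_cast
        rw [show ((t:ℝ)+1+1) = (t:ℝ)+2 from by ring]
        linarith
  rw [isBigO_iff]
  refine ⟨1 + 2*Real.exp (2*D)/D, ?_⟩
  have hev3 : ∀ᶠ t : ℕ in atTop, K ≤ D^2 * Real.sqrt (t:ℝ) := by
    filter_upwards [eventually_ge_atTop ⌈(K/D^2)^2⌉₊] with t ht
    have h1 : (K/D^2)^2 ≤ (t:ℝ) := le_trans (Nat.le_ceil _) (by exact_mod_cast ht)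
    have h2 : K/D^2 ≤ Real.sqrt (t:ℝ) := (Real.le_sqrt (by positivity) (by positivity)).2 h1
    rw [div_le_iff₀ (by positivity)] at h2
    linarith
  filter_upwards [eventually_ge_atTop T, eventually_ge_atTop 1, hev3] with t htT ht1 htK
  have hs0 : (0:ℝ) < Real.sqrt (t:ℝ) := Real.sqrt_pos.2 (by exact_mod_cast Nat.lt_of_lt_of_le Nat.zero_lt_one ht1)
  have hsum := claim t htT
  have hsum0 : (0:ℝ) ≤ ∑ τ ∈ Finset.Icc 1 t,
      (1 / (τ : ℝ)) * Real.exp (2 * D * Real.sqrt (τ + 1)) :=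
    Finset.sum_nonneg fun τ _ => by positivity
  have hE0 : (0:ℝ) < Real.exp (-2 * D * Real.sqrt (t:ℝ)) := Real.exp_pos _
  have hexp_big : D^2 * (t:ℝ) ≤ Real.exp (2*D*Real.sqrt (t:ℝ)) := by
    have h1 : D*Real.sqrt (t:ℝ) + 1 ≤ Real.exp (D*Real.sqrt (t:ℝ)) := Real.add_one_le_exp _
    have h2 : Real.exp (2*D*Real.sqrt (t:ℝ))
        = Real.exp (D*Real.sqrt (t:ℝ)) * Real.exp (D*Real.sqrt (t:ℝ)) := by
      rw [← Real.exp_add]; ring_nf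
    have hsq : Real.sqrt (t:ℝ)^2 = (t:ℝ) := Real.sq_sqrt (by positivity)
    nlinarith [Real.exp_pos (D*Real.sqrt (t:ℝ)), mul_pos hD hs0]
  have piece1 : Real.exp (-2 * D * Real.sqrt (t:ℝ)) * K ≤ 1 / Real.sqrt (t:ℝ) := by
    rw [show (-2 * D * Real.sqrt (t:ℝ)) = -(2*D*Real.sqrt (t:ℝ)) from by ring, Real.exp_neg,
      inv_mul_eq_div, div_le_div_iff₀ (Real.exp_pos _) hs0]
    calc K * Real.sqrt (t:ℝ) ≤ (D^2 * Real.sqrt (t:ℝ)) * Real.sqrt (t:ℝ) :=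
          mul_le_mul_of_nonneg_right htK hs0.le
      _ = D^2 * (t:ℝ) := by rw [mul_assoc, Real.mul_self_sqrt (by positivity)]
      _ ≤ Real.exp (2*D*Real.sqrt (t:ℝ)) := hexp_big
      _ = Real.exp (2*D*Real.sqrt (t:ℝ)) * 1 := (mul_one _).symm
      _ ≤ 1 * Real.exp (2*D*Real.sqrt (t:ℝ)) := by linarith [Real.exp_pos (2*D*Real.sqrt (t:ℝ))]
  have piece2 : Real.exp (-2 * D * Real.sqrt (t:ℝ)) * Real.exp (2*D*Real.sqrt ((t:ℝ)+1))
      ≤ Real.exp (2*D) := by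
    rw [← Real.exp_add]
    apply Real.exp_le_exp.2
    have h1 : Real.sqrt ((t:ℝ)+1) ≤ Real.sqrt (t:ℝ) + 1 := by
      have h2 : (t:ℝ)+1 ≤ (Real.sqrt (t:ℝ) + 1)^2 := by
        have h3 := Real.sq_sqrt (show (0:ℝ) ≤ (t:ℝ) by positivity)
        nlinarith [Real.sqrt_nonneg (t:ℝ)]
      have h4 := Real.sqrt_le_sqrt h2
      rwa [Real.sqrt_sq (by positivity)] at h4
    nlinarith [hD]
  have main : Real.exp (-2 * D * Real.sqrt (t:ℝ)) *
      (∑ τ ∈ Finset.Icc 1 t, (1 / (τ : ℝ)) * Real.exp (2 * D * Real.sqrt (τ + 1)))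
      ≤ (1 + 2*Real.exp (2*D)/D) * (1/Real.sqrt (t:ℝ)) := by
    calc Real.exp (-2 * D * Real.sqrt (t:ℝ)) *
        (∑ τ ∈ Finset.Icc 1 t, (1 / (τ : ℝ)) * Real.exp (2 * D * Real.sqrt (τ + 1)))
        ≤ Real.exp (-2 * D * Real.sqrt (t:ℝ)) *
            (K + (2/D) * (Real.exp (2*D*Real.sqrt ((t:ℝ)+1)) / Real.sqrt (t:ℝ))) :=
          mul_le_mul_of_nonneg_left hsum hE0.le
      _ = Real.exp (-2 * D * Real.sqrt (t:ℝ)) * K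
          + (2/D) * (Real.exp (-2 * D * Real.sqrt (t:ℝ)) * Real.exp (2*D*Real.sqrt ((t:ℝ)+1)))
            * (1/Real.sqrt (t:ℝ)) := by ring
      _ ≤ 1/Real.sqrt (t:ℝ) + (2/D) * Real.exp (2*D) * (1/Real.sqrt (t:ℝ)) := by
          have h5 := mul_le_mul_of_nonneg_right
            (mul_le_mul_of_nonneg_left piece2 (by positivity : (0:ℝ) ≤ 2/D))
            (by positivity : (0:ℝ) ≤ 1/Real.sqrt (t:ℝ))
          linarith [piece1, h5]
      _ = (1 + 2*Real.exp (2*D)/D) * (1/Real.sqrt (t:ℝ)) := by ring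
  rw [Real.norm_eq_abs, Real.norm_eq_abs, abs_of_nonneg (mul_nonneg hE0.le hsum0),
    abs_of_nonneg (by positivity)]
  exact main
end

section
/- Let $0 < \beta < 1$ and let $t \geq 2$ be an integer. Then $\sum_{k=1}^{t-1} \beta^k \sum_{j=1}^{k} \frac{1}{\sqrt{t-j}} \leq \frac{\sqrt{2}\, \beta}{(1-\beta)^2 \sqrt{t}} + \frac{\beta^{\lfloor t/2 \rfloor + 1}}{(1-\beta)^2}$. -/
/-!
Exchanging the order of summation turns the double sum into `∑ⱼ (t - j)^{-1/2} ∑_{k ≥ j} β^k`,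
and the inner geometric tail is at most `β^j / (1 - β)`. Splitting at `j = ⌊t/2⌋`, the terms with
`j ≤ t/2` have `(t - j)^{-1/2} ≤ √2 / √t`, and the remaining ones have `(t - j)^{-1/2} ≤ 1` but carry
a geometric tail starting at `β^{⌊t/2⌋ + 1}`.
-/

open Finset

theorem Finset.sum_Icc_mul_sum_Icc_comm {R : Type*} [CommSemiring R] (f g : ℕ → R) (n : ℕ) :
    ∑ k ∈ Icc 1 n, f k * ∑ j ∈ Icc 1 k, g j = ∑ j ∈ Icc 1 n, g j * ∑ k ∈ Icc j n, f k := by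
  simp_rw [mul_sum]
  rw [sum_comm' (t' := Icc 1 n) (s' := fun j => Icc j n)]
  · simp_rw [mul_comm]
  · intro k j
    simp only [mem_Icc]
    omega

section GeometricWeights

variable {K : Type*} [Field K] [LinearOrder K] [IsStrictOrderedRing K] {β : K}

theorem geom_sum_Icc_le_of_lt_one (hβ0 : 0 ≤ β) (hβ1 : β < 1) (a b : ℕ) :
    ∑ k ∈ Icc a b, β ^ k ≤ β ^ a / (1 - β) := by
  rw [← Ico_add_one_right_eq_Icc]
  exact geom_sum_Ico_le_of_lt_one hβ0 hβ1

theorem sum_pow_mul_sum_Icc_le (hβ0 : 0 ≤ β) (hβ1 : β < 1) {g : ℕ → K} (hg : ∀ j, 0 ≤ g j)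
    (n : ℕ) :
    ∑ k ∈ Icc 1 n, β ^ k * ∑ j ∈ Icc 1 k, g j ≤ (∑ j ∈ Icc 1 n, β ^ j * g j) / (1 - β) := by
  rw [sum_Icc_mul_sum_Icc_comm, sum_div]
  gcongr with j
  calc g j * ∑ k ∈ Icc j n, β ^ k ≤ g j * (β ^ j / (1 - β)) :=
        mul_le_mul_of_nonneg_left (geom_sum_Icc_le_of_lt_one hβ0 hβ1 j n) (hg j)
    _ = β ^ j * g j / (1 - β) := by ring

theorem sum_Icc_pow_mul_le (hβ0 : 0 ≤ β) (hβ1 : β < 1) {g : ℕ → K} {c : K} (hc : 0 ≤ c)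
    {a b : ℕ} (hg : ∀ j ∈ Icc a b, g j ≤ c) :
    ∑ j ∈ Icc a b, β ^ j * g j ≤ c * (β ^ a / (1 - β)) :=
  calc ∑ j ∈ Icc a b, β ^ j * g j ≤ ∑ j ∈ Icc a b, c * β ^ j := by
        refine sum_le_sum fun j hj => ?_
        rw [mul_comm c]
        exact mul_le_mul_of_nonneg_left (hg j hj) (pow_nonneg hβ0 j)
    _ = c * ∑ j ∈ Icc a b, β ^ j := (mul_sum _ _ _).symm
    _ ≤ c * (β ^ a / (1 - β)) := by gcongr; exact geom_sum_Icc_le_of_lt_one hβ0 hβ1 a b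

theorem sum_pow_mul_le_of_le_of_le (hβ0 : 0 ≤ β) (hβ1 : β < 1) {g : ℕ → K} {c d : K}
    (hc : 0 ≤ c) (hd : 0 ≤ d) {m n : ℕ} (hmn : m ≤ n)
    (hlow : ∀ j ∈ Icc 1 m, g j ≤ c) (hhigh : ∀ j ∈ Icc (m + 1) n, g j ≤ d) :
    ∑ j ∈ Icc 1 n, β ^ j * g j ≤ c * (β / (1 - β)) + d * (β ^ (m + 1) / (1 - β)) := by
  have hsplit := sum_Ioc_consecutive (fun j => β ^ j * g j) (Nat.zero_le m) hmn
  simp only [← Icc_add_one_left_eq_Ioc, zero_add] at hsplit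
  rw [← hsplit]
  gcongr
  · simpa using sum_Icc_pow_mul_le hβ0 hβ1 hc hlow
  · exact sum_Icc_pow_mul_le hβ0 hβ1 hd hhigh

end GeometricWeights

theorem Real.one_div_sqrt_sub_le_of_two_mul_le {t s : ℝ} (ht : 0 < t) (hs : 2 * s ≤ t) :
    1 / √(t - s) ≤ √2 / √t := by
  rw [div_le_div_iff₀ (Real.sqrt_pos.2 (by linarith)) (Real.sqrt_pos.2 ht), one_mul,
    ← Real.sqrt_mul zero_le_two]
  exact Real.sqrt_le_sqrt (by linarith)

theorem Real.one_div_sqrt_le_one {x : ℝ} (hx : 1 ≤ x) : 1 / √x ≤ 1 := by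
  rw [div_le_one (Real.sqrt_pos.2 (by linarith))]
  exact Real.one_le_sqrt.2 hx

/-- Explicit bound on `S(t) = ∑_{k=1}^{t-1} β^k ∑_{j=1}^{k} 1/√(t-j)`. -/
theorem stmt14 (β : ℝ) (hβ0 : 0 < β) (hβ1 : β < 1) (t : ℕ) (ht : 2 ≤ t) :
    ∑ k ∈ Finset.Icc 1 (t - 1), β ^ k * ∑ j ∈ Finset.Icc 1 k, 1 / Real.sqrt ((t : ℝ) - j)
      ≤ Real.sqrt 2 * β / ((1 - β) ^ 2 * Real.sqrt t) + β ^ (t / 2 + 1) / (1 - β) ^ 2 := by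
  have hlow : ∀ j ∈ Icc 1 (t / 2), 1 / √((t : ℝ) - j) ≤ √2 / √t := fun j hj =>
    Real.one_div_sqrt_sub_le_of_two_mul_le (by positivity)
      (by exact_mod_cast (by grind : 2 * j ≤ t))
  have hhigh : ∀ j ∈ Icc (t / 2 + 1) (t - 1), 1 / √((t : ℝ) - j) ≤ 1 := fun j hj => by
    have : (j : ℝ) + 1 ≤ t := by exact_mod_cast (by grind : j + 1 ≤ t)
    exact Real.one_div_sqrt_le_one (by linarith)
  calc _ ≤ (∑ j ∈ Icc 1 (t - 1), β ^ j * (1 / √((t : ℝ) - j))) / (1 - β) :=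
        sum_pow_mul_sum_Icc_le hβ0.le hβ1 (fun j => by positivity) (t - 1)
    _ ≤ (√2 / √t * (β / (1 - β)) + 1 * (β ^ (t / 2 + 1) / (1 - β))) / (1 - β) := by
        gcongr
        exact sum_pow_mul_le_of_le_of_le hβ0.le hβ1 (by positivity) zero_le_one (by omega)
          hlow hhigh
    _ = _ := by
        have : 1 - β ≠ 0 := (sub_pos.2 hβ1).ne'
        field_simp
end

section
/- Let $0 < \beta < 1$. Then, as the integer $t \to \infty$, $S(t) := \sum_{k=1}^{t-1} \beta^k \sum_{j=1}^{k} \frac{1}{\sqrt{t-j}} = O\left(\frac{1}{\sqrt{t}}\right)$. -/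
open Asymptotics Filter

/-- As the integer `t → ∞`,
`S(t) = ∑_{k=1}^{t-1} β^k ∑_{j=1}^{k} 1/√(t-j) = O(1/√t)`. -/
theorem stmt15 (β : ℝ) (hβ0 : 0 < β) (hβ1 : β < 1) :
    (fun t : ℕ => ∑ k ∈ Finset.Icc 1 (t - 1), β ^ k *
        ∑ j ∈ Finset.Icc 1 k, 1 / Real.sqrt ((t : ℝ) - j))
      =O[atTop] fun t : ℕ => 1 / Real.sqrt t := by
  have hsum : Summable fun n : ℕ => (n : ℝ) ^ 2 * β ^ n :=
    summable_pow_mul_geometric_of_norm_lt_one 2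
      (by rw [Real.norm_eq_abs, abs_of_pos hβ0]; exact hβ1)
  set C : ℝ := ∑' n : ℕ, (n : ℝ) ^ 2 * β ^ n with hC
  have hC0 : 0 ≤ C := tsum_nonneg fun n => by positivity
  rw [isBigO_iff]
  refine ⟨2 * C, ?_⟩
  filter_upwards [eventually_ge_atTop 1] with t ht
  have ht1 : (1:ℝ) ≤ t := by exact_mod_cast ht
  have hst : 0 < Real.sqrt t := Real.sqrt_pos.2 (by linarith)
  have key : ∑ k ∈ Finset.Icc 1 (t - 1), β ^ k *
        ∑ j ∈ Finset.Icc 1 k, 1 / Real.sqrt ((t : ℝ) - j)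
      ≤ (2 * C) * (1 / Real.sqrt t) := by
    calc ∑ k ∈ Finset.Icc 1 (t - 1), β ^ k * ∑ j ∈ Finset.Icc 1 k, 1 / Real.sqrt ((t : ℝ) - j)
        ≤ ∑ k ∈ Finset.Icc 1 (t - 1), (2 * (k:ℝ)^2 * β ^ k) * (1 / Real.sqrt t) := by
          apply Finset.sum_le_sum
          intro k hk
          obtain ⟨hk1, hk2⟩ := Finset.mem_Icc.mp hk
          have hkt : (k:ℝ) + 1 ≤ t := by
            have : k + 1 ≤ t := by omega
            exact_mod_cast this
          have hk1' : (1:ℝ) ≤ k := by exact_mod_cast hk1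
          have htk : (1:ℝ) ≤ (t:ℝ) - k := by linarith
          have hstk : 0 < Real.sqrt ((t:ℝ) - k) := Real.sqrt_pos.2 (by linarith)
          have inner : ∑ j ∈ Finset.Icc 1 k, 1 / Real.sqrt ((t : ℝ) - j)
              ≤ (k:ℝ) * (1 / Real.sqrt ((t:ℝ) - k)) := by
            calc ∑ j ∈ Finset.Icc 1 k, 1 / Real.sqrt ((t : ℝ) - j)
                ≤ ∑ _j ∈ Finset.Icc 1 k, 1 / Real.sqrt ((t:ℝ) - k) := by
                  apply Finset.sum_le_sum
                  intro j hj
                  obtain ⟨hj1, hj2⟩ := Finset.mem_Icc.mp hj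
                  have hjk : (j:ℝ) ≤ k := by exact_mod_cast hj2
                  exact one_div_le_one_div_of_le hstk (Real.sqrt_le_sqrt (by linarith))
              _ = (k:ℝ) * (1 / Real.sqrt ((t:ℝ) - k)) := by
                  rw [Finset.sum_const, Nat.card_Icc]
                  simp
          have hbd : 1 / Real.sqrt ((t:ℝ) - k) ≤ ((k:ℝ)+1) * (1 / Real.sqrt t) := by
            rw [mul_one_div, div_le_div_iff₀ hstk hst, one_mul]
            calc Real.sqrt t ≤ Real.sqrt (((t:ℝ) - k) * ((k:ℝ)+1)) := by
                  apply Real.sqrt_le_sqrt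
                  nlinarith
              _ = Real.sqrt ((t:ℝ) - k) * Real.sqrt ((k:ℝ)+1) := by
                  rw [Real.sqrt_mul (by linarith)]
              _ ≤ Real.sqrt ((t:ℝ) - k) * ((k:ℝ)+1) := by
                  have hs := Real.sq_sqrt (show (0:ℝ) ≤ (k:ℝ)+1 by linarith)
                  have hs0 := Real.sqrt_nonneg ((k:ℝ)+1)
                  have : Real.sqrt ((k:ℝ)+1) ≤ (k:ℝ)+1 := by nlinarith
                  nlinarith [Real.sqrt_nonneg ((t:ℝ)-k)]
              _ = ((k:ℝ)+1) * Real.sqrt ((t:ℝ) - k) := by ring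
          have hβk : (0:ℝ) ≤ β ^ k := by positivity
          calc β ^ k * ∑ j ∈ Finset.Icc 1 k, 1 / Real.sqrt ((t : ℝ) - j)
              ≤ β ^ k * ((k:ℝ) * (((k:ℝ)+1) * (1 / Real.sqrt t))) := by
                apply mul_le_mul_of_nonneg_left _ hβk
                calc ∑ j ∈ Finset.Icc 1 k, 1 / Real.sqrt ((t : ℝ) - j)
                    ≤ (k:ℝ) * (1 / Real.sqrt ((t:ℝ) - k)) := inner
                  _ ≤ (k:ℝ) * (((k:ℝ)+1) * (1 / Real.sqrt t)) := by
                      apply mul_le_mul_of_nonneg_left hbd (by linarith)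
            _ ≤ (2 * (k:ℝ)^2 * β ^ k) * (1 / Real.sqrt t) := by
                have h1 : (k:ℝ) * ((k:ℝ)+1) ≤ 2 * (k:ℝ)^2 := by nlinarith
                have h2 : (0:ℝ) ≤ 1 / Real.sqrt t := by positivity
                nlinarith [mul_le_mul_of_nonneg_right h1 h2, mul_le_mul_of_nonneg_left
                  (mul_le_mul_of_nonneg_right h1 h2) hβk]
      _ = (∑ k ∈ Finset.Icc 1 (t-1), 2 * (k:ℝ)^2 * β ^ k) * (1 / Real.sqrt t) := by
          rw [← Finset.sum_mul]
      _ ≤ (2 * C) * (1 / Real.sqrt t) := by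
          apply mul_le_mul_of_nonneg_right _ (by positivity)
          have : ∑ k ∈ Finset.Icc 1 (t-1), 2 * (k:ℝ)^2 * β ^ k
              = 2 * ∑ k ∈ Finset.Icc 1 (t-1), (k:ℝ)^2 * β ^ k := by
            rw [Finset.mul_sum]; exact Finset.sum_congr rfl fun x _ => by ring
          rw [this]
          gcongr
          exact Summable.sum_le_tsum _ (fun n _ => by positivity) hsum
  have hnn : 0 ≤ ∑ k ∈ Finset.Icc 1 (t - 1), β ^ k *
        ∑ j ∈ Finset.Icc 1 k, 1 / Real.sqrt ((t : ℝ) - j) := by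
    apply Finset.sum_nonneg
    intro k hk
    apply mul_nonneg (by positivity)
    apply Finset.sum_nonneg
    intro j hj
    positivity
  rw [Real.norm_eq_abs, Real.norm_eq_abs, abs_of_nonneg hnn, abs_of_nonneg (by positivity)]
  exact key
end

section
/- Let $N \geq 1$, $M \leq N$, $K \geq 2$, $S \geq 1$ be integers, let $\ell_{n,k} \in \mathbb{R}$ for $n \in \{1,\dots,N\}$ and $k \in \{1,\dots,K\}$, and define the centered values $\bar{\ell}_{n,k} = \ell_{n,k} - \frac{1}{K}\sum_{j=1}^{K} \ell_{n,j}$. Let $\mathcal{S} \subseteq \{1,\dots,N\}$ with $|\mathcal{S}| = S$, let $w \in \mathbb{R}^M$, and define $g \in \mathbb{R}^M$ by $g_m = \frac{1}{K-1} \sum_{k=1}^{K} \bar{\ell}_{m,k} \left( \sum_{m'=1}^{M} w_{m'} \bar{\ell}_{m',k} - \frac{N}{S} \sum_{n \in \mathcal{S}} \bar{\ell}_{n,k} \right)$. Suppose there exist $w^\star \in \mathbb{R}^M$ and $c^\star \in \mathbb{R}$ such that $\sum_{n=1}^{N} \ell_{n,k} = \sum_{m=1}^{M} w^\star_m \ell_{m,k}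 + c^\star$ for every $k \in \{1,\dots,K\}$. Define the matrices $G \in \mathbb{R}^{M \times M}$ with $G_{m,m'} = \frac{1}{K-1} \sum_{k=1}^{K} \bar{\ell}_{m,k} \bar{\ell}_{m',k}$ and $H \in \mathbb{R}^{M \times N}$ with $H_{m,n} = \frac{1}{K-1} \sum_{k=1}^{K} \bar{\ell}_{m,k} \bar{\ell}_{n,k}$, and the vector $s \in \mathbb{R}^N$ with $s_n = N/S$ if $n \in \mathcal{S}$ and $s_n = 0$ otherwise. Then $g = G(w - w^\star) + H(\mathbf{1} - s)$, where $\mathbf{1} \in \mathbb{R}^N$ is the all-ones vector. -/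
/-- Decomposition of the Coreset MCMC stochastic gradient estimate:
`g = G (w - w⋆) + H (𝟏 - s)` under the exact-coreset assumption. -/
theorem stmt16 (N M K S : ℕ) (hN : 1 ≤ N) (hMN : M ≤ N) (hK : 2 ≤ K) (hS : 1 ≤ S)
    (ℓ : Fin N → Fin K → ℝ) (𝒮 : Finset (Fin N)) (h𝒮 : 𝒮.card = S)
    (w wstar : Fin M → ℝ) (cstar : ℝ)
    (hexact : ∀ k : Fin K,
      ∑ n, ℓ n k = (∑ m, wstar m * ℓ (Fin.castLE hMN m) k) + cstar) :
    let ℓbar : Fin N → Fin K → ℝ := fun n k => ℓ n k - (1 / (K : ℝ)) * ∑ j, ℓ n j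
    let g : Fin M → ℝ := fun m => (1 / ((K : ℝ) - 1)) * ∑ k, ℓbar (Fin.castLE hMN m) k *
        ((∑ m', w m' * ℓbar (Fin.castLE hMN m') k) - ((N : ℝ) / S) * ∑ n ∈ 𝒮, ℓbar n k)
    let G : Matrix (Fin M) (Fin M) ℝ := fun m m' =>
      (1 / ((K : ℝ) - 1)) * ∑ k, ℓbar (Fin.castLE hMN m) k * ℓbar (Fin.castLE hMN m') k
    let H : Matrix (Fin M) (Fin N) ℝ := fun m n =>
      (1 / ((K : ℝ) - 1)) * ∑ k, ℓbar (Fin.castLE hMN m) k * ℓbar n k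
    let s : Fin N → ℝ := fun n => if n ∈ 𝒮 then (N : ℝ) / S else 0
    g = G.mulVec (w - wstar) + H.mulVec (fun n => 1 - s n) := by
  intro ℓbar g G H s
  have hK0 : (K : ℝ) ≠ 0 := by
    have : (0:ℝ) < K := by exact_mod_cast Nat.lt_of_lt_of_le (by norm_num) hK
    exact ne_of_gt this
  -- centered exact-coreset identity
  have hcent : ∀ k, ∑ n, ℓbar n k = ∑ m, wstar m * ℓbar (Fin.castLE hMN m) k := by
    intro k
    have h1 : ∑ n, ℓbar n k
        = (∑ n, ℓ n k) - (1 / (K:ℝ)) * ∑ j, ∑ n, ℓ n j := by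
      simp only [ℓbar, Finset.sum_sub_distrib, Finset.mul_sum]
      rw [Finset.sum_comm]
    have h2 : ∑ m, wstar m * ℓbar (Fin.castLE hMN m) k
        = (∑ m, wstar m * ℓ (Fin.castLE hMN m) k)
          - (1 / (K:ℝ)) * ∑ j, ∑ m, wstar m * ℓ (Fin.castLE hMN m) j := by
      simp only [ℓbar, mul_sub, Finset.sum_sub_distrib, Finset.mul_sum]
      rw [Finset.sum_comm]
      ring_nf
      congr 1
      exact Finset.sum_congr rfl fun x _ => Finset.sum_congr rfl fun y _ => by ring
    rw [h1, h2, hexact k]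
    have h3 : ∑ j, ∑ n, ℓ n j
        = (∑ j, ∑ m, wstar m * ℓ (Fin.castLE hMN m) j) + (K:ℝ) * cstar := by
      simp only [hexact, Finset.sum_add_distrib, Finset.sum_const,
        Finset.card_univ, Fintype.card_fin, nsmul_eq_mul]
    rw [h3]
    field_simp
    ring
  -- rewrite the subsample sum as a dot product with s
  have hs : ∀ k, ∑ n, s n * ℓbar n k = ((N:ℝ) / S) * ∑ n ∈ 𝒮, ℓbar n k := by
    intro k
    simp only [s, ite_mul, zero_mul]
    rw [Finset.sum_ite_mem, Finset.univ_inter, Finset.mul_sum]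
  funext m
  simp only [Pi.add_apply, Matrix.mulVec, dotProduct, G, H, g, Pi.sub_apply]
  have key : ∀ k : Fin K,
      ℓbar (Fin.castLE hMN m) k *
        ((∑ m', w m' * ℓbar (Fin.castLE hMN m') k)
          - ((N:ℝ) / S) * ∑ n ∈ 𝒮, ℓbar n k)
      = (∑ m', ℓbar (Fin.castLE hMN m) k * ℓbar (Fin.castLE hMN m') k *
            (w m' - wstar m'))
        + ∑ n, ℓbar (Fin.castLE hMN m) k * ℓbar n k * (1 - s n) := by
    intro k
    have e1 : ∑ m', ℓbar (Fin.castLE hMN m) k * ℓbar (Fin.castLE hMN m') k *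
          (w m' - wstar m')
        = ℓbar (Fin.castLE hMN m) k *
          ((∑ m', w m' * ℓbar (Fin.castLE hMN m') k)
            - ∑ m', wstar m' * ℓbar (Fin.castLE hMN m') k) := by
      rw [mul_sub, Finset.mul_sum, Finset.mul_sum, ← Finset.sum_sub_distrib]
      exact Finset.sum_congr rfl fun m' _ => by ring
    have e2 : ∑ n, ℓbar (Fin.castLE hMN m) k * ℓbar n k * (1 - s n)
        = ℓbar (Fin.castLE hMN m) k *
          ((∑ n, ℓbar n k) - ∑ n, s n * ℓbar n k) := by
      rw [mul_sub, Finset.mul_sum, Finset.mul_sum, ← Finset.sum_sub_distrib]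
      exact Finset.sum_congr rfl fun n _ => by ring
    rw [e1, e2, hcent k, hs k]
    ring
  have rhs1 : ∑ m', (1 / ((K:ℝ) - 1)) *
      (∑ k, ℓbar (Fin.castLE hMN m) k * ℓbar (Fin.castLE hMN m') k) *
      (w m' - wstar m')
      = (1 / ((K:ℝ) - 1)) * ∑ k, ∑ m',
        ℓbar (Fin.castLE hMN m) k * ℓbar (Fin.castLE hMN m') k *
          (w m' - wstar m') := by
    calc ∑ m', (1 / ((K:ℝ) - 1)) *
          (∑ k, ℓbar (Fin.castLE hMN m) k * ℓbar (Fin.castLE hMN m') k) *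
          (w m' - wstar m')
        = ∑ m', (1 / ((K:ℝ) - 1)) * ∑ k,
            ℓbar (Fin.castLE hMN m) k * ℓbar (Fin.castLE hMN m') k *
              (w m' - wstar m') :=
          Finset.sum_congr rfl fun m' _ => by
            rw [mul_assoc, Finset.sum_mul]
      _ = (1 / ((K:ℝ) - 1)) * ∑ m', ∑ k,
            ℓbar (Fin.castLE hMN m) k * ℓbar (Fin.castLE hMN m') k *
              (w m' - wstar m') := (Finset.mul_sum _ _ _).symm
      _ = _ := by rw [Finset.sum_comm]
  have rhs2 : ∑ n, (1 / ((K:ℝ) - 1)) *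
      (∑ k, ℓbar (Fin.castLE hMN m) k * ℓbar n k) * (1 - s n)
      = (1 / ((K:ℝ) - 1)) * ∑ k, ∑ n,
        ℓbar (Fin.castLE hMN m) k * ℓbar n k * (1 - s n) := by
    calc ∑ n, (1 / ((K:ℝ) - 1)) *
          (∑ k, ℓbar (Fin.castLE hMN m) k * ℓbar n k) * (1 - s n)
        = ∑ n, (1 / ((K:ℝ) - 1)) * ∑ k,
            ℓbar (Fin.castLE hMN m) k * ℓbar n k * (1 - s n) :=
          Finset.sum_congr rfl fun n _ => by
            rw [mul_assoc, Finset.sum_mul]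
      _ = (1 / ((K:ℝ) - 1)) * ∑ n, ∑ k,
            ℓbar (Fin.castLE hMN m) k * ℓbar n k * (1 - s n) :=
          (Finset.mul_sum _ _ _).symm
      _ = _ := by rw [Finset.sum_comm]
  rw [rhs1, rhs2, ← mul_add, ← Finset.sum_add_distrib]
  exact congrArg _ (Finset.sum_congr rfl fun k _ => key k)
end
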